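/- Fix a Markov policy π. For each h ∈ [H] and s ∈ 𝒮, define the A×A matrix W^π_{h,s} whose every column equals the vector (π_h(a|s))_{a∈𝒜}, and let W^π ∈ ℝ^{SAH×SAH} be the block-diagonal matrix of the W^π_{h,s}. Define the steering reward R_π(μ) := −μᵀ(W^π − I)ᵀ(W^π − I) for μ ∈ ℝ^{SAH}. Then for any feasible occupancy measures μ and for the occupancy measure μ^π of policy π in the same model, one has ⟨R_π(μ), μ^π − μ⟩ = ‖(W^π − I)μ‖₂² = Σ_{h,s,a} (μ_h(s))² |π_h(a|s) − π̄_h(a|s)|², where μ_h(s) = Σ_a μ_h(s,a) and π̄_h(a|s) = μ_h(s,a)/μ_h(s) whenever μ_h(s) > 0 (and π̄_h(·|s) arbitrary, e.g., uniform, otherwise). -/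

import Mathlib

/-!
On each block `(h, s)` write `D x := (W^π_{h,s} - I) x`, i.e. `(D x)_a = π_h(a|s) Σ_b x_b - x_a`.
The steering reward is `R_π(μ) = -Dᵀ D μ`, so `⟨R_π(μ), x⟩ = -⟨D μ, D x⟩`. The Bellman flow
equations say exactly that `D μ^π = 0`, hence `D (μ^π - μ) = -D μ` and
`⟨R_π(μ), μ^π - μ⟩ = ‖D μ‖²`. Finally `(D μ)_a = μ_h(s) (π_h(a|s) - π̄_h(a|s))`, where the case
`μ_h(s) = 0` uses `μ ≥ 0`, which holds because `μ` is itself an occupancy measure.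
-/

open Finset

def IsPolicy {S A : Type*} [Fintype A] (π : ℕ → S → A → ℝ) : Prop :=
  ∀ h s, (∀ a, 0 ≤ π h s a) ∧ ∑ a, π h s a = 1

def IsKernel {S A : Type*} [Fintype S] (P : ℕ → S → A → S → ℝ) : Prop :=
  ∀ h s a, (∀ s', 0 ≤ P h s a s') ∧ ∑ s', P h s a s' = 1

def IsProb {S : Type*} [Fintype S] (μ₁ : S → ℝ) : Prop :=
  (∀ s, 0 ≤ μ₁ s) ∧ ∑ s, μ₁ s = 1

noncomputable def occ {S A : Type*} [Fintype S] [Fintype A] (μ₁ : S → ℝ)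
    (P : ℕ → S → A → S → ℝ) (π : ℕ → S → A → ℝ) : ℕ → S → A → ℝ
  | 0 => fun s a => μ₁ s * π 0 s a
  | (h+1) => fun s a => π (h+1) s a * ∑ s', ∑ a', P h s' a' s * occ μ₁ P π h s' a'


/-- Coordinate formula for the steering reward `R_π(μ) = −μᵀ(W^π−I)ᵀ(W^π−I)`:
`(R_π(μ))_{h,s,a} = −Σ_{a'} (π_h(a'|s)μ_h(s) − μ_h(s,a'))(π_h(a'|s) − 1{a'=a})`. -/
noncomputable def Rpi {S A : Type*} [Fintype A] [DecidableEq A]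
    (π : ℕ → S → A → ℝ) (μ : ℕ → S → A → ℝ) (h : ℕ) (s : S) (a : A) : ℝ :=
  - ∑ a', (π h s a' * (∑ b, μ h s b) - μ h s a') * (π h s a' - if a' = a then 1 else 0)

/-- The policy induced by a density `μ`: `π̄_h(a|s) = μ_h(s,a)/μ_h(s)` (uniform if `μ_h(s)=0`). -/
noncomputable def pibar {S A : Type*} [Fintype A] (μ : ℕ → S → A → ℝ) :
    ℕ → S → A → ℝ :=
  fun h s a => if (∑ b, μ h s b) = 0 then 1 / (Fintype.card A : ℝ) else μ h s a / (∑ b, μ h s b)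

section FlowDefect

variable {A : Type*} [Fintype A]

/-- `(W - I) x` on a single block `W = W^π_{h,s}`, all of whose columns equal `p = π_h(·|s)`. -/
def flowDefect (p x : A → ℝ) (a : A) : ℝ :=
  p a * ∑ b, x b - x a

lemma flowDefect_sub (p x y : A → ℝ) (a : A) :
    flowDefect p (x - y) a = flowDefect p x a - flowDefect p y a := by
  simp only [flowDefect, Pi.sub_apply, sum_sub_distrib]
  ring

lemma sum_sub_indicator_mul [DecidableEq A] (p x : A → ℝ) (a' : A) :
    ∑ a, (p a' - if a' = a then 1 else 0) * x a = flowDefect p x a' := by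
  simp only [sub_mul, sum_sub_distrib, ← mul_sum, ite_mul, one_mul, zero_mul, sum_ite_eq,
    mem_univ, if_true, flowDefect]

lemma sum_Rpi_mul {S : Type*} [DecidableEq A] (π μ : ℕ → S → A → ℝ) (h : ℕ) (s : S)
    (x : A → ℝ) :
    ∑ a, Rpi π μ h s a * x a =
      -∑ a', flowDefect (π h s) (μ h s) a' * flowDefect (π h s) x a' := by
  calc ∑ a, Rpi π μ h s a * x a
      = -∑ a, ∑ a',
          flowDefect (π h s) (μ h s) a' * ((π h s a' - if a' = a then 1 else 0) * x a) := by
        simp only [Rpi, flowDefect, neg_mul, sum_mul, mul_assoc, sum_neg_distrib]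
    _ = -∑ a', flowDefect (π h s) (μ h s) a' * ∑ a, (π h s a' - if a' = a then 1 else 0) * x a := by
        rw [sum_comm]
        simp only [mul_sum]
    _ = _ := by simp only [sum_sub_indicator_mul]

lemma sum_Rpi_mul_sub_of_flowDefect_eq_zero {S : Type*} [DecidableEq A]
    (π μ : ℕ → S → A → ℝ) (h : ℕ) (s : S) (ν : A → ℝ) (hν : ∀ a, flowDefect (π h s) ν a = 0) :
    ∑ a, Rpi π μ h s a * (ν a - μ h s a) = ∑ a, flowDefect (π h s) (μ h s) a ^ 2 := by
  have h_sub := sum_Rpi_mul π μ h s (ν - μ h s)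
  simp only [Pi.sub_apply] at h_sub
  rw [h_sub, ← sum_neg_distrib]
  refine sum_congr rfl fun a _ => ?_
  rw [flowDefect_sub, hν]
  ring

lemma flowDefect_sq_eq_sq_mul_sq_sub_pibar {S : Type*} (π μ : ℕ → S → A → ℝ) (h : ℕ) (s : S)
    (hμ : ∀ b, 0 ≤ μ h s b) (a : A) :
    flowDefect (π h s) (μ h s) a ^ 2 = (∑ b, μ h s b) ^ 2 * (π h s a - pibar μ h s a) ^ 2 := by
  by_cases hM : ∑ b, μ h s b = 0
  · have hz : μ h s a = 0 := (sum_eq_zero_iff_of_nonneg fun b _ => hμ b).1 hM a (mem_univ a)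
    simp [flowDefect, hM, hz]
  · simp only [flowDefect, pibar, if_neg hM]
    field_simp

end FlowDefect

section Occupancy

variable {S A : Type*} [Fintype S] [Fintype A]

lemma occ_nonneg {μ₁ : S → ℝ} (hμ₁ : ∀ s, 0 ≤ μ₁ s) {P : ℕ → S → A → S → ℝ}
    (hP : ∀ h s a s', 0 ≤ P h s a s') {π : ℕ → S → A → ℝ} (hπ : ∀ h s a, 0 ≤ π h s a) :
    ∀ h s a, 0 ≤ occ μ₁ P π h s a
  | 0, s, a => mul_nonneg (hμ₁ s) (hπ 0 s a)
  | h + 1, s, a => mul_nonneg (hπ _ s a) <| sum_nonneg fun s' _ => sum_nonneg fun a' _ =>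
      mul_nonneg (hP h s' a' s) (occ_nonneg hμ₁ hP hπ h s' a')

lemma flowDefect_occ (μ₁ : S → ℝ) (P : ℕ → S → A → S → ℝ) {π : ℕ → S → A → ℝ}
    (hπ : ∀ h s, ∑ a, π h s a = 1) (h : ℕ) (s : S) (a : A) :
    flowDefect (π h s) (occ μ₁ P π h s) a = 0 := by
  rw [flowDefect, sub_eq_zero]
  cases h with
  | zero => simp only [occ, ← mul_sum, hπ 0 s]; ring
  | succ h => simp only [occ, ← sum_mul, hπ (h + 1) s, one_mul]

end Occupancy

/-- for any feasible occupancy measure μ (induced by some policy ρ) and any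
policy π, `⟨R_π(μ), μ^π − μ⟩ = ‖(W^π − I)μ‖₂² = Σ_{h,s,a} (μ_h(s))² |π_h(a|s) − π̄_h(a|s)|²`. -/
theorem stmt3 {S A : Type*} [Fintype S] [Fintype A] [DecidableEq A]
    (H : ℕ) (μ₁ : S → ℝ) (hμ₁ : IsProb μ₁)
    (P : ℕ → S → A → S → ℝ) (hP : IsKernel P)
    (π ρ : ℕ → S → A → ℝ) (hπ : IsPolicy π) (hρ : IsPolicy ρ)
    (μ : ℕ → S → A → ℝ) (hμ : μ = occ μ₁ P ρ) :
    (∑ h ∈ Finset.range H, ∑ s, ∑ a,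
        Rpi π μ h s a * (occ μ₁ P π h s a - μ h s a)
      = ∑ h ∈ Finset.range H, ∑ s, ∑ a,
          (π h s a * (∑ b, μ h s b) - μ h s a) ^ 2) ∧
    (∑ h ∈ Finset.range H, ∑ s, ∑ a,
        (π h s a * (∑ b, μ h s b) - μ h s a) ^ 2
      = ∑ h ∈ Finset.range H, ∑ s, ∑ a,
          (∑ b, μ h s b) ^ 2 * (π h s a - pibar μ h s a) ^ 2) := by
  subst hμ
  refine ⟨sum_congr rfl fun h _ => sum_congr rfl fun s _ => ?_,
    sum_congr rfl fun h _ => sum_congr rfl fun s _ => sum_congr rfl fun a _ => ?_⟩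
  · exact sum_Rpi_mul_sub_of_flowDefect_eq_zero π _ h s _
      (flowDefect_occ μ₁ P (fun h s => (hπ h s).2) h s)
  · exact flowDefect_sq_eq_sq_mul_sq_sub_pibar π _ h s
      (occ_nonneg hμ₁.1 (fun h s a => (hP h s a).1) (fun h s => (hρ h s).1) h s) a
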